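/- The operator H_I, regarded as a densely defined operator on the Hilbert space ℓ²(ℕ, ℂ) with domain the subspace of finitely supported sequences, is essentially self-adjoint: it is a symmetric (densely defined) operator and its adjoint coincides with its closure. -/

import Mathlib

/-- The operator H_I in the spin-network basis: (H_I a) 0 = 0,
(H_I a) 1 = i·(5/4)·a 2, (H_I a) n = i·(n/2 + 3/4)·a(n+1) − i·(n/2 + 1/4)·a(n−1) for n ≥ 2. -/
noncomputable def HI (a : ℕ → ℂ) (n : ℕ) : ℂ :=
  if n = 0 then 0
  else if n = 1 then Complex.I * (5 / 4) * a 2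
  else Complex.I * ((n : ℂ) / 2 + 3 / 4) * a (n + 1) -
        Complex.I * ((n : ℂ) / 2 + 1 / 4) * a (n - 1)

/-- The subspace of ℓ²(ℕ, ℂ) consisting of finitely supported sequences. -/
noncomputable def finSuppSubmodule : Submodule ℂ (lp (fun _ : ℕ => ℂ) 2) where
  carrier := {f : lp (fun _ : ℕ => ℂ) 2 | (Function.support (⇑f : ℕ → ℂ)).Finite}
  zero_mem' := by
    show (Function.support (⇑(0 : lp (fun _ : ℕ => ℂ) 2) : ℕ → ℂ)).Finite
    rw [lp.coeFn_zero]
    simp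
  add_mem' := by
    intro f g hf hg
    show (Function.support (⇑(f + g) : ℕ → ℂ)).Finite
    refine Set.Finite.subset (Set.Finite.union hf hg) ?_
    rw [lp.coeFn_add]
    exact Function.support_add _ _
  smul_mem' := by
    intro c f hf
    show (Function.support (⇑(c • f) : ℕ → ℂ)).Finite
    refine Set.Finite.subset hf ?_
    rw [lp.coeFn_smul]
    exact Function.support_const_smul_subset c ⇑f

/-!
`H_I` is a Jacobi (tridiagonal Hermitian) matrix whose off-diagonal entries grow linearly.
Green's identity for such matrices shows that the operator on finitely supported sequences is
symmetric and that its adjoint acts by the same difference expression on its maximal domain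
`{y ∈ ℓ² | H y ∈ ℓ²}`. Such a `y` lies in the closure: cut it off with the piecewise linear `ψ_N`
(`1` up to `N`, `0` from `2N` on). The commutator `[H, ψ_N]` is bounded uniformly in `N`, since the
slope `1 / N` of `ψ_N` compensates coefficients of size `O(N)` on its ramp, so `ψ_N y → y` and
`H (ψ_N y) → H y` in `ℓ²` by dominated convergence.
-/

open Complex Filter Topology Finset
open scoped ComplexConjugate ENNReal LinearPMap

local notation "ℓ²" => lp (fun _ : ℕ => ℂ) 2

theorem LinearPMap.adjoint_eq_closure_of_forall_mem_closure {𝕜 E : Type*} [RCLike 𝕜]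
    [NormedAddCommGroup E] [InnerProductSpace 𝕜 E] [CompleteSpace E] {T : E →ₗ.[𝕜] E}
    (hT : Dense (T.domain : Set E)) (hsymm : T.IsFormalAdjoint T)
    (h : ∀ y : T†.domain, ((y : E), T† y) ∈ _root_.closure (T.graph : Set (E × E))) :
    T† = T.closure := by
  have hle : T ≤ T† := hsymm.le_adjoint hT
  have hcl : T.IsClosable := (adjoint_isClosed hT).isClosable.leIsClosable hle
  refine le_antisymm (le_of_le_graph fun p hp => ?_) (le_of_le_graph ?_)
  · obtain ⟨y, hy₁, hy₂⟩ := T†.mem_graph_iff.1 hp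
    obtain rfl : p = ((y : E), T† y) := Prod.ext hy₁.symm hy₂.symm
    rw [← hcl.graph_closure_eq_closure_graph, ← SetLike.mem_coe,
      Submodule.topologicalClosure_coe]
    exact h y
  · rw [← hcl.graph_closure_eq_closure_graph]
    exact Submodule.topologicalClosure_minimal _ (le_graph_of_le hle) (adjoint_isClosed hT)

theorem Memℓp.comp_add_one {E : Type*} [NormedAddCommGroup E] {p : ℝ≥0∞} (hp : 0 < p.toReal)
    {f : ℕ → E} (hf : Memℓp f p) : Memℓp (fun n => f (n + 1)) p := by
  rw [memℓp_gen_iff hp] at hf ⊢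
  exact (summable_nat_add_iff 1).2 hf

theorem Memℓp.comp_sub_one {E : Type*} [NormedAddCommGroup E] {p : ℝ≥0∞} (hp : 0 < p.toReal)
    {f : ℕ → E} (hf : Memℓp f p) : Memℓp (fun n => f (n - 1)) p := by
  rw [memℓp_gen_iff hp] at hf ⊢
  exact (summable_nat_add_iff 1).1 (by simpa using hf)

theorem lp.tendsto_of_tendsto_apply_of_dominated {α ι : Type*} {E : α → Type*}
    [∀ a, NormedAddCommGroup (E a)] {p : ℝ≥0∞} [Fact (1 ≤ p)] (hp : p ≠ ∞) {F : Filter ι}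
    {f : ι → lp E p} {g : lp E p} {bound : α → ℝ} (hbound : Memℓp bound p)
    (hfg : ∀ a, Tendsto (fun i => f i a) F (𝓝 (g a)))
    (hdom : ∀ᶠ i in F, ∀ a, ‖f i a - g a‖ ≤ bound a) : Tendsto f F (𝓝 g) := by
  have hr : 0 < p.toReal := ENNReal.toReal_pos (zero_lt_one.trans_le Fact.out).ne' hp
  have hpow : Tendsto (fun i => ‖f i - g‖ ^ p.toReal) F (𝓝 0) := by
    simp_rw [lp.norm_rpow_eq_tsum hr, lp.coeFn_sub, Pi.sub_apply]
    have key := tendsto_tsum_of_dominated_convergence (𝓕 := F)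
      (f := fun i a => ‖f i a - g a‖ ^ p.toReal) (g := fun _ => 0)
      (hbound.summable hr) (fun a => ?_) ?_
    · rwa [tsum_zero] at key
    · simpa [Real.zero_rpow hr.ne'] using
        ((tendsto_sub_nhds_zero_iff.2 (hfg a)).norm.rpow_const (Or.inr hr.le))
    · filter_upwards [hdom] with i hi a
      rw [Real.norm_of_nonneg (by positivity)]
      gcongr
      exact (hi a).trans (Real.le_norm_self _)
  rw [tendsto_iff_norm_sub_tendsto_zero]
  simpa [← Real.rpow_mul (norm_nonneg _), mul_inv_cancel₀ hr.ne', Real.zero_rpow (inv_pos.2 hr).ne']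
    using hpow.rpow_const (p := p.toReal⁻¹) (Or.inr (inv_pos.2 hr).le)

section Jacobi

variable (b : ℕ → ℝ) (u : ℕ → ℂ)

noncomputable def jacobiMap : (ℕ → ℂ) →ₗ[ℂ] (ℕ → ℂ) where
  toFun a
    | 0 => b 0 * a 0 + u 0 * a 1
    | n + 1 => conj (u n) * a n + b (n + 1) * a (n + 1) + u (n + 1) * a (n + 2)
  map_add' a a' := by funext n; cases n <;> simp only [Pi.add_apply] <;> ring
  map_smul' c a := by funext n; cases n <;> simp only [Pi.smul_apply, smul_eq_mul,
    RingHom.id_apply] <;> ring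

@[simp] theorem jacobiMap_apply_zero (a : ℕ → ℂ) : jacobiMap b u a 0 = b 0 * a 0 + u 0 * a 1 :=
  rfl

@[simp] theorem jacobiMap_apply_succ (a : ℕ → ℂ) (n : ℕ) : jacobiMap b u a (n + 1) =
    conj (u n) * a n + b (n + 1) * a (n + 1) + u (n + 1) * a (n + 2) :=
  rfl

variable {b u}

theorem jacobiMap_apply_eq_of_eqOn {a a' : ℕ → ℂ} {n : ℕ} (h : ∀ m ≤ n + 1, a m = a' m) :
    jacobiMap b u a n = jacobiMap b u a' n := by
  cases n with
  | zero => simp [h 0 (by omega), h 1 (by omega)]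
  | succ n => simp [h n (by omega), h (n + 1) (by omega), h (n + 2) le_rfl]

theorem jacobiMap_eventually_eq_zero {a : ℕ → ℂ} (ha : ∀ᶠ n in atTop, a n = 0) :
    ∀ᶠ n in atTop, jacobiMap b u a n = 0 := by
  obtain ⟨K, hK⟩ := eventually_atTop.1 ha
  refine eventually_atTop.2 ⟨K + 1, fun n hn => ?_⟩
  obtain ⟨m, rfl⟩ : ∃ m, n = m + 1 := ⟨n - 1, by omega⟩
  simp [hK m (by omega), hK (m + 1) (by omega), hK (m + 2) (by omega)]

theorem jacobiMap_green (a y : ℕ → ℂ) (K : ℕ) :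
    ∑ n ∈ range (K + 1), conj (jacobiMap b u a n) * y n -
      ∑ n ∈ range (K + 1), conj (a n) * jacobiMap b u y n =
      conj (u K) * conj (a (K + 1)) * y K - u K * conj (a K) * y (K + 1) := by
  induction K with
  | zero => simp; ring
  | succ K ih =>
    rw [sum_range_succ, sum_range_succ (fun n => conj (a n) * _), add_sub_add_comm, ih]
    simp [Complex.conj_ofReal]
    ring

theorem jacobiMap_tsum_conj_mul {a : ℕ → ℂ} (ha : ∀ᶠ n in atTop, a n = 0) (y : ℕ → ℂ) :
    ∑' n, conj (jacobiMap b u a n) * y n = ∑' n, conj (a n) * jacobiMap b u y n := by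
  obtain ⟨K, hK⟩ := eventually_atTop.1 (ha.and (jacobiMap_eventually_eq_zero (b := b) (u := u) ha))
  have hout : ∀ n ∉ range (K + 1), K ≤ n := fun n hn => by simp at hn; omega
  rw [tsum_eq_sum fun n hn => by simp [(hK n (hout n hn)).2],
    tsum_eq_sum fun n hn => by simp [(hK n (hout n hn)).1], ← sub_eq_zero, jacobiMap_green,
    (hK K le_rfl).1, (hK (K + 1) (by omega)).1]
  simp

end Jacobi

/-- `1` on `[0, N]`, linear on `[N, 2N]`, `0` from `2N` on; the truncated subtraction does the
clamping. -/
noncomputable def jacobiCutoff (N n : ℕ) : ℝ := ((2 * N - max n N : ℕ) : ℝ) / N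

theorem jacobiCutoff_nonneg (N n : ℕ) : 0 ≤ jacobiCutoff N n := by
  unfold jacobiCutoff; positivity

theorem jacobiCutoff_le_one (N n : ℕ) : jacobiCutoff N n ≤ 1 :=
  div_le_one_of_le₀ (by exact_mod_cast (by omega : 2 * N - max n N ≤ N)) (Nat.cast_nonneg _)

theorem jacobiCutoff_of_le {N n : ℕ} (hN : 0 < N) (h : n ≤ N) : jacobiCutoff N n = 1 := by
  rw [jacobiCutoff, (by omega : 2 * N - max n N = N)]
  exact div_self (by positivity)

theorem jacobiCutoff_of_two_mul_le {N n : ℕ} (h : 2 * N ≤ n) : jacobiCutoff N n = 0 := by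
  simp [jacobiCutoff, (by omega : 2 * N - max n N = 0)]

theorem norm_mul_abs_jacobiCutoff_succ_sub_le {u : ℕ → ℂ} {C : ℝ}
    (hu : ∀ n, ‖u n‖ ≤ C * (n + 1)) (N m : ℕ) :
    ‖u m‖ * |jacobiCutoff N (m + 1) - jacobiCutoff N m| ≤ 2 * C := by
  have hC : 0 ≤ C := by simpa using (norm_nonneg _).trans (hu 0)
  by_cases hm : N ≤ m ∧ m < 2 * N
  · have hN : (0 : ℝ) < N := by exact_mod_cast (by omega : 0 < N)
    have hstep : jacobiCutoff N m = jacobiCutoff N (m + 1) + 1 / N := by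
      rw [jacobiCutoff, jacobiCutoff, ← add_div,
        (by omega : 2 * N - max m N = (2 * N - max (m + 1) N) + 1)]
      push_cast; rfl
    rw [hstep, sub_add_cancel_left, abs_neg, abs_of_pos (by positivity)]
    calc ‖u m‖ * (1 / N) ≤ C * (m + 1) * (1 / N) := by gcongr; exact hu m
      _ ≤ C * (2 * N) * (1 / N) := by gcongr; exact_mod_cast (by omega : m + 1 ≤ 2 * N)
      _ = 2 * C := by field_simp
  · have hflat : jacobiCutoff N (m + 1) = jacobiCutoff N m := by
      rw [jacobiCutoff, jacobiCutoff, (by omega : 2 * N - max (m + 1) N = 2 * N - max m N)]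
    simp [hflat, hC]

theorem norm_jacobiMap_cutoff_mul_sub_le {b : ℕ → ℝ} {u : ℕ → ℂ} {C : ℝ}
    (hu : ∀ n, ‖u n‖ ≤ C * (n + 1)) (N : ℕ) (y : ℕ → ℂ) (n : ℕ) :
    ‖jacobiMap b u (fun m => (jacobiCutoff N m : ℂ) * y m) n -
        jacobiCutoff N n * jacobiMap b u y n‖ ≤ 2 * C * (‖y (n + 1)‖ + ‖y (n - 1)‖) := by
  have hterm (w v : ℂ) (d : ℝ) (h : ‖w‖ * |d| ≤ 2 * C) : ‖w * d * v‖ ≤ 2 * C * ‖v‖ := by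
    rw [norm_mul, norm_mul, Complex.norm_real, Real.norm_eq_abs]
    exact mul_le_mul_of_nonneg_right h (norm_nonneg v)
  have hψ := norm_mul_abs_jacobiCutoff_succ_sub_le hu N
  cases n with
  | zero =>
    have e : jacobiMap b u (fun m => (jacobiCutoff N m : ℂ) * y m) 0 -
        jacobiCutoff N 0 * jacobiMap b u y 0 =
        u 0 * (jacobiCutoff N 1 - jacobiCutoff N 0 : ℝ) * y 1 := by
      simp; ring
    have hC : 0 ≤ 2 * C := (mul_nonneg (norm_nonneg _) (abs_nonneg _)).trans (hψ 0)
    rw [e, zero_add, Nat.zero_sub]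
    nlinarith [hterm _ (y 1) _ (hψ 0), norm_nonneg (y 0)]
  | succ n =>
    have e : jacobiMap b u (fun m => (jacobiCutoff N m : ℂ) * y m) (n + 1) -
        jacobiCutoff N (n + 1) * jacobiMap b u y (n + 1) =
        conj (u n) * (jacobiCutoff N n - jacobiCutoff N (n + 1) : ℝ) * y n +
          u (n + 1) * (jacobiCutoff N (n + 2) - jacobiCutoff N (n + 1) : ℝ) * y (n + 2) := by
      simp; ring
    have h₁ := hterm (conj (u n)) (y n) _ (by rw [Complex.norm_conj, abs_sub_comm]; exact hψ n)
    have h₂ := hterm (u (n + 1)) (y (n + 2)) _ (hψ (n + 1))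
    rw [e, add_tsub_cancel_right]
    linarith [norm_add_le (conj (u n) * (jacobiCutoff N n - jacobiCutoff N (n + 1) : ℝ) * y n)
      (u (n + 1) * (jacobiCutoff N (n + 2) - jacobiCutoff N (n + 1) : ℝ) * y (n + 2))]

theorem memℓp_of_eventually_eq_zero {E : Type*} [NormedAddCommGroup E] {p : ℝ≥0∞} {f : ℕ → E}
    (hf : ∀ᶠ n in atTop, f n = 0) : Memℓp f p := by
  rw [← Nat.cofinite_eq_atTop, eventually_cofinite] at hf
  exact (memℓp_zero hf).of_exponent_ge zero_le

theorem mem_finSuppSubmodule_iff {f : ℓ²} : f ∈ finSuppSubmodule ↔ ∀ᶠ n in atTop, f n = 0 := by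
  rw [← Nat.cofinite_eq_atTop, eventually_cofinite]
  rfl

theorem lp_single_mem_finSuppSubmodule (n : ℕ) (c : ℂ) :
    lp.single 2 n c ∈ finSuppSubmodule :=
  mem_finSuppSubmodule_iff.2 <| eventually_atTop.2
    ⟨n + 1, fun m hm => by simp [Pi.single_apply]; omega⟩

theorem dense_finSuppSubmodule : Dense (finSuppSubmodule : Set ℓ²) := fun f =>
  mem_closure_of_tendsto (lp.hasSum_single (by norm_num) f) <| Eventually.of_forall fun _ =>
    sum_mem fun n _ => lp_single_mem_finSuppSubmodule n (f n)

noncomputable def lpCutoff (N : ℕ) (y : ℓ²) : ℓ² :=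
  ⟨fun n => (jacobiCutoff N n : ℂ) * y n, memℓp_of_eventually_eq_zero <|
    eventually_atTop.2 ⟨2 * N, fun n hn => by simp [jacobiCutoff_of_two_mul_le hn]⟩⟩

theorem lpCutoff_mem_finSuppSubmodule (N : ℕ) (y : ℓ²) : lpCutoff N y ∈ finSuppSubmodule :=
  mem_finSuppSubmodule_iff.2 <|
    eventually_atTop.2 ⟨2 * N, fun n hn => by simp [lpCutoff, jacobiCutoff_of_two_mul_le hn]⟩

theorem lpCutoff_apply_of_le {N n : ℕ} (hn : n < N) (y : ℓ²) : lpCutoff N y n = y n := by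
  simp [lpCutoff, jacobiCutoff_of_le (by omega : 0 < N) hn.le]

theorem norm_jacobiCutoff_sub_one_mul_le (N n : ℕ) (w : ℂ) :
    ‖((jacobiCutoff N n : ℂ) - 1) * w‖ ≤ ‖w‖ := by
  rw [norm_mul, ← ofReal_one, ← ofReal_sub, norm_real, Real.norm_eq_abs]
  refine mul_le_of_le_one_left (norm_nonneg w) (abs_le.2 ⟨?_, ?_⟩) <;>
    linarith [jacobiCutoff_nonneg N n, jacobiCutoff_le_one N n]

theorem tendsto_lpCutoff (y : ℓ²) : Tendsto (fun N => lpCutoff N y) atTop (𝓝 y) := by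
  refine lp.tendsto_of_tendsto_apply_of_dominated (by norm_num) (lp.memℓp y).norm
    (fun n => tendsto_const_nhds.congr' ?_) (Eventually.of_forall fun N n => ?_)
  · filter_upwards [eventually_gt_atTop n] with N hN using (lpCutoff_apply_of_le hN y).symm
  · simpa [lpCutoff, sub_one_mul] using norm_jacobiCutoff_sub_one_mul_le N n (y n)

section JacobiOperator

variable (b : ℕ → ℝ) (u : ℕ → ℂ)

noncomputable def jacobiOperator : ℓ² →ₗ.[ℂ] ℓ² where
  domain := finSuppSubmodule
  toFun :=
    { toFun x := ⟨jacobiMap b u x,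
        memℓp_of_eventually_eq_zero (jacobiMap_eventually_eq_zero (mem_finSuppSubmodule_iff.1 x.2))⟩
      map_add' x y := by ext1; simp only [Submodule.coe_add, lp.coeFn_add, map_add]
      map_smul' c x := by ext1; simp only [Submodule.coe_smul, lp.coeFn_smul, map_smul]; rfl }

variable {b u}

theorem jacobiOperator_apply (x : (jacobiOperator b u).domain) (n : ℕ) :
    jacobiOperator b u x n = jacobiMap b u (x : ℓ²) n :=
  rfl

theorem inner_jacobiOperator_left (x : (jacobiOperator b u).domain) (y : ℓ²) :
    inner ℂ (jacobiOperator b u x) y = ∑' n, conj ((x : ℓ²) n) * jacobiMap b u y n := by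
  simp_rw [lp.inner_eq_tsum]
  simp only [RCLike.inner_apply', jacobiOperator_apply]
  exact jacobiMap_tsum_conj_mul (mem_finSuppSubmodule_iff.1 x.2) y

theorem jacobiOperator_isFormalAdjoint :
    (jacobiOperator b u).IsFormalAdjoint (jacobiOperator b u) := fun x y => by
  rw [inner_jacobiOperator_left, lp.inner_eq_tsum]
  simp only [RCLike.inner_apply', jacobiOperator_apply]

theorem jacobiOperator_adjoint_apply (y : (jacobiOperator b u)†.domain) (n : ℕ) :
    (jacobiOperator b u)† y n = jacobiMap b u (y : ℓ²) n := by
  have h := (LinearPMap.adjoint_isFormalAdjoint dense_finSuppSubmodule).symm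
    ⟨lp.single 2 n 1, lp_single_mem_finSuppSubmodule n 1⟩ y
  rw [inner_jacobiOperator_left, lp.inner_single_left, tsum_eq_single n] at h
  · simpa using h.symm
  · intro m hm
    simp [hm]

theorem tendsto_jacobiOperator_lpCutoff {C : ℝ} (hu : ∀ n, ‖u n‖ ≤ C * (n + 1)) {y z : ℓ²}
    (hz : ∀ n, z n = jacobiMap b u y n) :
    Tendsto (fun N => jacobiOperator b u ⟨lpCutoff N y, lpCutoff_mem_finSuppSubmodule N y⟩)
      atTop (𝓝 z) := by
  have hy := (lp.memℓp y).norm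
  have hbound : Memℓp (fun n => 2 * C * (‖y (n + 1)‖ + ‖y (n - 1)‖) + ‖z n‖) 2 :=
    (((hy.comp_add_one (by norm_num)).add (hy.comp_sub_one (by norm_num))).const_mul _).add
      (lp.memℓp z).norm
  refine lp.tendsto_of_tendsto_apply_of_dominated (by norm_num) hbound
    (fun n => tendsto_const_nhds.congr' ?_) (Eventually.of_forall fun N n => ?_)
  · filter_upwards [eventually_gt_atTop (n + 1)] with N hN
    rw [jacobiOperator_apply, hz]
    exact jacobiMap_apply_eq_of_eqOn fun m hm => (lpCutoff_apply_of_le (by omega) y).symm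
  · rw [jacobiOperator_apply, hz, ← sub_add_sub_cancel _ (jacobiCutoff N n * jacobiMap b u y n),
      ← sub_one_mul]
    exact (norm_add_le _ _).trans (add_le_add (norm_jacobiMap_cutoff_mul_sub_le hu N y n)
      (norm_jacobiCutoff_sub_one_mul_le N n _))

theorem jacobiOperator_adjoint_eq_closure {C : ℝ} (hu : ∀ n, ‖u n‖ ≤ C * (n + 1)) :
    (jacobiOperator b u)† = (jacobiOperator b u).closure := by
  refine LinearPMap.adjoint_eq_closure_of_forall_mem_closure dense_finSuppSubmodule
    jacobiOperator_isFormalAdjoint fun y => mem_closure_of_tendsto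
      ((tendsto_lpCutoff y).prodMk_nhds (tendsto_jacobiOperator_lpCutoff hu
        (jacobiOperator_adjoint_apply y))) (Eventually.of_forall fun N => ?_)
  exact (jacobiOperator b u).mem_graph ⟨lpCutoff N y, lpCutoff_mem_finSuppSubmodule N y⟩

end JacobiOperator

/-- `H_I` is the Jacobi matrix with zero diagonal and these off-diagonal entries; the zero entry
at `0` decouples the spin-`0` state. -/
noncomputable def hiOffDiagonal (n : ℕ) : ℂ := if n = 0 then 0 else I * (n / 2 + 3 / 4)

theorem norm_hiOffDiagonal_le (n : ℕ) : ‖hiOffDiagonal n‖ ≤ 1 * (n + 1) := by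
  unfold hiOffDiagonal
  split_ifs
  · simp; positivity
  · rw [norm_mul, norm_I, one_mul, one_mul, (by push_cast; ring : (n / 2 + 3 / 4 : ℂ) =
      ((n / 2 + 3 / 4 : ℝ) : ℂ)), norm_real, Real.norm_of_nonneg (by positivity)]
    linarith [(Nat.cast_nonneg n : (0 : ℝ) ≤ n)]

theorem HI_eq_jacobiMap (a : ℕ → ℂ) : HI a = jacobiMap 0 hiOffDiagonal a := by
  funext n
  rcases n with _ | _ | n
  · simp [HI, hiOffDiagonal]
  · norm_num [HI, hiOffDiagonal]
  · simp [HI, hiOffDiagonal, map_ofNat]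
    ring

theorem HI_essentially_selfAdjoint :
    ∃ T : lp (fun _ : ℕ => ℂ) 2 →ₗ.[ℂ] lp (fun _ : ℕ => ℂ) 2,
      T.domain = finSuppSubmodule ∧
      (∀ x : T.domain, ∀ n : ℕ, (⇑(T x) : ℕ → ℂ) n = HI (⇑(x : lp (fun _ : ℕ => ℂ) 2)) n) ∧
      Dense (T.domain : Set (lp (fun _ : ℕ => ℂ) 2)) ∧
      (∀ x y : T.domain,
        (inner ℂ (T x) ((y : T.domain) : lp (fun _ : ℕ => ℂ) 2) : ℂ) =
          inner ℂ ((x : T.domain) : lp (fun _ : ℕ => ℂ) 2) (T y)) ∧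
      T.adjoint = T.closure :=
  ⟨jacobiOperator 0 hiOffDiagonal, rfl, fun x n => by rw [HI_eq_jacobiMap]; rfl,
    dense_finSuppSubmodule, jacobiOperator_isFormalAdjoint,
    jacobiOperator_adjoint_eq_closure norm_hiOffDiagonal_le⟩
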